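/- In the ring M_n, if B_1,...,B_k are the blocks of a singleton-free set partition of [n] with k ≥ 1, then ∏_{i=1}^{k} h(B_i) = h([n]) · ∏_{i=1}^{k-1} h(B_i). -/
import Mathlib


open MvPolynomial

/-- The defining relations of the ring `M_n`: diagonal generators vanish, `x_{a,b}² = 0`,
`x_{a,b}·x_{a,c} = 0` for distinct `a,b,c`, and the Ptolemy relations
`x_{a,b}x_{c,d} + x_{a,c}x_{b,d} + x_{a,d}x_{b,c} = 0` for distinct `a,b,c,d`. -/
def relSet (n : ℕ) : Set (MvPolynomial (Sym2 (Fin n)) ℚ) :=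
  {p | (∃ a : Fin n, p = X s(a, a)) ∨
       (∃ a b : Fin n, a ≠ b ∧ p = X s(a, b) * X s(a, b)) ∨
       (∃ a b c : Fin n, a ≠ b ∧ a ≠ c ∧ b ≠ c ∧ p = X s(a, b) * X s(a, c)) ∨
       (∃ a b c d : Fin n, a ≠ b ∧ a ≠ c ∧ a ≠ d ∧ b ≠ c ∧ b ≠ d ∧ c ≠ d ∧
         p = X s(a, b) * X s(c, d) + X s(a, c) * X s(b, d) + X s(a, d) * X s(b, c))}

/-- The ring `M_n`, presented by generators `x_{a,b}` for two-element subsets `{a,b}` of `[n]`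
subject to the relations in `relSet`. -/
abbrev Mring (n : ℕ) := MvPolynomial (Sym2 (Fin n)) ℚ ⧸ Ideal.span (relSet n)

/-- The generator `x_{a,b}` of `M_n`. -/
noncomputable def xg {n : ℕ} (a b : Fin n) : Mring n :=
  Ideal.Quotient.mk _ (X s(a, b))

/-- `h(A) = Σ_{{a,b} ⊆ A} x_{a,b}`, the sum over two-element subsets of `A`. -/
noncomputable def hA {n : ℕ} (A : Finset (Fin n)) : Mring n :=
  ∑ a ∈ A, ∑ b ∈ A.filter (fun b => a < b), xg a b

/-! ### Auxiliary lemmas -/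

lemma xg_symm {n : ℕ} (a b : Fin n) : xg a b = xg b a := by
  unfold xg; rw [Sym2.eq_swap]

lemma xg_diag {n : ℕ} (a : Fin n) : xg a a = 0 := by
  rw [xg, Ideal.Quotient.eq_zero_iff_mem]
  exact Ideal.subset_span (Or.inl ⟨a, rfl⟩)

lemma z_aa {n : ℕ} (a b c : Fin n) : xg a b * xg a c = 0 := by
  by_cases hab : a = b
  · subst hab; rw [xg_diag, zero_mul]
  by_cases hac : a = c
  · subst hac; rw [xg_diag, mul_zero]
  by_cases hbc : b = c
  · subst hbc
    unfold xg
    rw [← map_mul, Ideal.Quotient.eq_zero_iff_mem]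
    exact Ideal.subset_span (Or.inr (Or.inl ⟨a, b, hab, rfl⟩))
  · unfold xg
    rw [← map_mul, Ideal.Quotient.eq_zero_iff_mem]
    exact Ideal.subset_span (Or.inr (Or.inr (Or.inl ⟨a, b, c, hab, hac, hbc, rfl⟩)))

lemma z_ab {n : ℕ} (a b c : Fin n) : xg a b * xg c a = 0 := by
  rw [xg_symm c a]; exact z_aa a b c

lemma z_ba {n : ℕ} (a b c : Fin n) : xg b a * xg a c = 0 := by
  rw [xg_symm b a]; exact z_aa a b c

lemma z_bb {n : ℕ} (a b c : Fin n) : xg b a * xg c a = 0 := by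
  rw [xg_symm b a, xg_symm c a]; exact z_aa a b c

lemma ptolemy {n : ℕ} {a b c d : Fin n} (hab : a ≠ b) (hac : a ≠ c) (had : a ≠ d)
    (hbc : b ≠ c) (hbd : b ≠ d) (hcd : c ≠ d) :
    xg a b * xg c d + xg a c * xg b d + xg a d * xg b c = 0 := by
  unfold xg
  rw [← map_mul, ← map_mul, ← map_mul, ← map_add, ← map_add,
    Ideal.Quotient.eq_zero_iff_mem]
  exact Ideal.subset_span
    (Or.inr (Or.inr (Or.inr ⟨a, b, c, d, hab, hac, had, hbc, hbd, hcd, rfl⟩)))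

/-- The Ptolemy relation holds with no distinctness hypotheses. -/
lemma ptolemy4 {n : ℕ} (a b c d : Fin n) :
    xg a b * xg c d + xg a c * xg b d + xg a d * xg b c = 0 := by
  by_cases hab : a = b
  · subst hab; simp [xg_diag, z_aa, z_ab, z_ba, z_bb]
  by_cases hac : a = c
  · subst hac; simp [xg_diag, z_aa, z_ab, z_ba, z_bb]
  by_cases had : a = d
  · subst had; simp [xg_diag, z_aa, z_ab, z_ba, z_bb]
  by_cases hbc : b = c
  · subst hbc; simp [xg_diag, z_aa, z_ab, z_ba, z_bb]
  by_cases hbd : b = d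
  · subst hbd; simp [xg_diag, z_aa, z_ab, z_ba, z_bb]
  by_cases hcd : c = d
  · subst hcd; simp [xg_diag, z_aa, z_ab, z_ba, z_bb]
  · exact ptolemy hab hac had hbc hbd hcd

lemma sum3_rot {M : Type*} [AddCommMonoid M] {α : Type*} (A : Finset α)
    (f : α → α → α → M) :
    ∑ c ∈ A, ∑ d ∈ A, ∑ e ∈ A, f c d e = ∑ c ∈ A, ∑ d ∈ A, ∑ e ∈ A, f d e c := by
  conv_rhs => rw [Finset.sum_comm]
  exact Finset.sum_congr rfl fun x _ => Finset.sum_comm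

lemma smul_cancel' {n : ℕ} (r : ℚ) (hr : r ≠ 0) {x y : Mring n}
    (h : r • x = r • y) : x = y := by
  have h2 := congrArg (fun z : Mring n => r⁻¹ • z) h
  simpa [smul_smul, inv_mul_cancel₀ hr] using h2

lemma smul_cancel {n : ℕ} (r : ℚ) (hr : r ≠ 0) {x : Mring n}
    (h : r • x = 0) : x = 0 := by
  refine smul_cancel' r hr ?_
  rw [smul_zero]; exact h

lemma row_mul_q {n : ℕ} (a : Fin n) (A : Finset (Fin n)) :
    (∑ b ∈ A, xg a b) * (∑ c ∈ A, ∑ d ∈ A, xg c d) = 0 := by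
  have hexp : (∑ b ∈ A, xg a b) * (∑ c ∈ A, ∑ d ∈ A, xg c d)
      = ∑ c ∈ A, ∑ d ∈ A, ∑ e ∈ A, xg a c * xg d e := by
    rw [Finset.sum_mul]
    exact Finset.sum_congr rfl fun c _ => by
      rw [Finset.mul_sum]
      exact Finset.sum_congr rfl fun d _ => Finset.mul_sum _ _ _
  rw [hexp]
  set S := ∑ c ∈ A, ∑ d ∈ A, ∑ e ∈ A, xg a c * xg d e with hS
  have h1 : S = ∑ c ∈ A, ∑ d ∈ A, ∑ e ∈ A, xg a d * xg e c :=
    sum3_rot A (fun c d e => xg a c * xg d e)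
  have h2 : S = ∑ c ∈ A, ∑ d ∈ A, ∑ e ∈ A, xg a e * xg c d :=
    h1.trans (sum3_rot A (fun c d e => xg a d * xg e c))
  have h3 : S + S + S = 0 := by
    have hcomb : S + S + S = ∑ c ∈ A, ∑ d ∈ A, ∑ e ∈ A,
        (xg a c * xg d e + xg a d * xg e c + xg a e * xg c d) := by
      simp only [Finset.sum_add_distrib]
      rw [← hS, ← h1, ← h2]
    rw [hcomb]
    refine Finset.sum_eq_zero fun c _ => Finset.sum_eq_zero fun d _ =>
      Finset.sum_eq_zero fun e _ => ?_
    rw [xg_symm e c]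
    exact ptolemy4 a c d e
  have h4 : (3 : ℚ) • S = 0 := by
    rw [show (3 : ℚ) = 1 + 1 + 1 by norm_num, add_smul, add_smul, one_smul]
    exact h3
  exact smul_cancel 3 (by norm_num) h4

lemma q_eq {n : ℕ} (A : Finset (Fin n)) :
    ∑ a ∈ A, ∑ b ∈ A, xg a b = hA A + hA A := by
  have key : ∀ a b : Fin n, xg a b =
      (if a < b then xg a b else 0) + (if b < a then xg b a else 0) := by
    intro a b
    rcases lt_trichotomy a b with h | h | h
    · simp [h, asymm h]
    · subst h; simp [lt_irrefl, xg_diag]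
    · simp [h, asymm h, xg_symm a b]
  calc ∑ a ∈ A, ∑ b ∈ A, xg a b
      = ∑ a ∈ A, ∑ b ∈ A,
          ((if a < b then xg a b else 0) + (if b < a then xg b a else 0)) :=
        Finset.sum_congr rfl fun a _ => Finset.sum_congr rfl fun b _ => key a b
    _ = (∑ a ∈ A, ∑ b ∈ A, if a < b then xg a b else 0)
        + ∑ a ∈ A, ∑ b ∈ A, if b < a then xg b a else 0 := by
        simp only [Finset.sum_add_distrib]
    _ = hA A + hA A := by
        congr 1
        · unfold hA
          exact Finset.sum_congr rfl fun a _ => (Finset.sum_filter _ _).symm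
        · rw [Finset.sum_comm]
          unfold hA
          exact Finset.sum_congr rfl fun b _ => (Finset.sum_filter _ _).symm

lemma row_mul_hA {n : ℕ} (a : Fin n) (A : Finset (Fin n)) :
    (∑ b ∈ A, xg a b) * hA A = 0 := by
  have h := row_mul_q a A
  rw [q_eq, mul_add] at h
  have h2 : (2 : ℚ) • ((∑ b ∈ A, xg a b) * hA A) = 0 := by
    rw [two_smul]; exact h
  exact smul_cancel 2 two_ne_zero h2

lemma cross_mul {n : ℕ} (S A : Finset (Fin n)) :
    (∑ a ∈ S, ∑ b ∈ A, xg a b) * hA A = 0 := by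
  rw [Finset.sum_mul]
  exact Finset.sum_eq_zero fun a _ => row_mul_hA a A

lemma hA_sq {n : ℕ} (A : Finset (Fin n)) : hA A * hA A = 0 := by
  have h : (∑ a ∈ A, ∑ b ∈ A, xg a b) * hA A = 0 := cross_mul A A
  rw [q_eq, add_mul] at h
  have h2 : (2 : ℚ) • (hA A * hA A) = 0 := by rw [two_smul]; exact h
  exact smul_cancel 2 two_ne_zero h2

lemma main_aux {n k : ℕ} (B : Fin k → Finset (Fin n))
    (hdisj : ∀ i j, i ≠ j → Disjoint (B i) (B j))
    (hcover : (Finset.univ : Finset (Fin k)).sup B = Finset.univ)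
    (t : Fin k) :
    ∏ i, hA (B i) =
      hA (Finset.univ : Finset (Fin n)) * ∏ i ∈ Finset.univ.erase t, hA (B i) := by
  have hbi : (Finset.univ : Finset (Fin k)).biUnion B = Finset.univ := by
    rw [← Finset.sup_eq_biUnion]; exact hcover
  have hpd : (↑(Finset.univ : Finset (Fin k)) : Set (Fin k)).PairwiseDisjoint B :=
    fun i _ j _ hij => hdisj i j hij
  have hsplit : ∀ f : Fin n → Mring n,
      ∑ a ∈ (Finset.univ : Finset (Fin n)), f a = ∑ i, ∑ a ∈ B i, f a := by
    intro f; rw [← hbi, Finset.sum_biUnion hpd]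
  have hz1 : ∀ i j, j ≠ t →
      (∑ a ∈ B i, ∑ b ∈ B j, xg a b) * ∏ l ∈ Finset.univ.erase t, hA (B l) = 0 := by
    intro i j hj
    have hjm : j ∈ Finset.univ.erase t := Finset.mem_erase.mpr ⟨hj, Finset.mem_univ j⟩
    rw [← Finset.mul_prod_erase _ _ hjm, ← mul_assoc, cross_mul, zero_mul]
  have hz2 : ∀ i, i ≠ t →
      (∑ a ∈ B i, ∑ b ∈ B t, xg a b) * ∏ l ∈ Finset.univ.erase t, hA (B l) = 0 := by
    intro i hi
    have hsym : (∑ a ∈ B i, ∑ b ∈ B t, xg a b) = ∑ b ∈ B t, ∑ a ∈ B i, xg b a := by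
      rw [Finset.sum_comm]
      exact Finset.sum_congr rfl fun b _ => Finset.sum_congr rfl fun a _ => xg_symm a b
    have him : i ∈ Finset.univ.erase t := Finset.mem_erase.mpr ⟨hi, Finset.mem_univ i⟩
    rw [hsym, ← Finset.mul_prod_erase _ _ him, ← mul_assoc, cross_mul, zero_mul]
  have key : (∑ a ∈ B t, ∑ b ∈ B t, xg a b) * ∏ l ∈ Finset.univ.erase t, hA (B l)
      = (∑ a ∈ (Finset.univ : Finset (Fin n)), ∑ b ∈ Finset.univ, xg a b)
        * ∏ l ∈ Finset.univ.erase t, hA (B l) := by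
    have hq : ∑ a ∈ (Finset.univ : Finset (Fin n)), ∑ b ∈ Finset.univ, xg a b
        = ∑ i, ∑ j, ∑ a ∈ B i, ∑ b ∈ B j, xg a b := by
      rw [hsplit]
      refine Finset.sum_congr rfl fun i _ => ?_
      calc ∑ a ∈ B i, ∑ b ∈ Finset.univ, xg a b
          = ∑ a ∈ B i, ∑ j, ∑ b ∈ B j, xg a b :=
            Finset.sum_congr rfl fun a _ => hsplit _
        _ = ∑ j, ∑ a ∈ B i, ∑ b ∈ B j, xg a b := Finset.sum_comm
    rw [hq]
    symm
    conv_lhs => rw [Finset.sum_mul]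
    have e1 : ∀ i ∈ (Finset.univ : Finset (Fin k)), i ≠ t →
        (∑ j, ∑ a ∈ B i, ∑ b ∈ B j, xg a b) * ∏ l ∈ Finset.univ.erase t, hA (B l)
          = 0 := by
      intro i _ hi
      rw [Finset.sum_mul]
      refine Finset.sum_eq_zero fun j _ => ?_
      by_cases hj : j = t
      · subst hj; exact hz2 i hi
      · exact hz1 i j hj
    rw [Finset.sum_eq_single_of_mem t (Finset.mem_univ t) e1, Finset.sum_mul,
      Finset.sum_eq_single_of_mem t (Finset.mem_univ t) (fun j _ hj => hz1 t j hj)]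
  rw [← Finset.mul_prod_erase Finset.univ (fun i => hA (B i)) (Finset.mem_univ t)]
  have h2 : (hA (B t) + hA (B t)) * ∏ l ∈ Finset.univ.erase t, hA (B l)
      = (hA (Finset.univ : Finset (Fin n)) + hA Finset.univ)
        * ∏ l ∈ Finset.univ.erase t, hA (B l) := by
    rw [← q_eq, ← q_eq]; exact key
  rw [add_mul, add_mul] at h2
  refine smul_cancel' 2 two_ne_zero ?_
  rw [two_smul, two_smul]
  exact h2

/-- If `B₁,…,B_k` are the blocks of a singleton-free set partition of `[n]` (with `k ≥ 1`),
then `∏_{i=1}^k h(B_i) = h([n]) · ∏_{i=1}^{k-1} h(B_i)`. -/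
theorem prod_hA_blocks (n k : ℕ) (hk : 1 ≤ k) (B : Fin k → Finset (Fin n))
    (hdisj : ∀ i j, i ≠ j → Disjoint (B i) (B j))
    (hcover : (Finset.univ : Finset (Fin k)).sup B = Finset.univ)
    (hsize : ∀ i, 2 ≤ (B i).card) :
    ∏ i, hA (B i) =
      hA (Finset.univ : Finset (Fin n)) *
        ∏ i ∈ Finset.univ.erase (⟨k - 1, by omega⟩ : Fin k), hA (B i) := by
  exact main_aux B hdisj hcover ⟨k - 1, by omega⟩
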